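/- Assume A is a local ring with maximal ideal M, that J is contained in the Jacobson radical Jac(B) of B, and that J is finitely generated as an A-module (where B is viewed as an A-module via f). Then for every prime ideal Q of B not containing J, one has f^{-1}(Q) ≠ M. -/
import Mathlib

open Polynomial

/-- If `A` is local with maximal ideal `M`, `J ⊆ Jac(B)`, and `J` is finitely generated
as an `A`-module (via `f`), then `f⁻¹(Q) ≠ M` for every prime `Q` of `B` not
containing `J`. -/
theorem stmt15 {A B : Type*} [CommRing A] [CommRing B] (f : A →+* B) (J : Ideal B)
    (M : Ideal A) (hM : M.IsMaximal) (hu : ∀ N : Ideal A, N.IsMaximal → N = M)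
    (hJac : J ≤ (⊥ : Ideal B).jacobson)
    (hfg : ∃ s : Finset B, (s : Set B) ⊆ (J : Set B) ∧
      ∀ x ∈ J, ∃ c : B → A, x = ∑ b ∈ s, f (c b) * b) :
    ∀ Q : Ideal B, Q.IsPrime → ¬ J ≤ Q → Ideal.comap f Q ≠ M := by
  intro Q hQ hJQ hcomap
  letI : Algebra A B := f.toAlgebra
  have hsmul : ∀ (a : A) (b : B), a • b = f a * b := fun a b => rfl
  obtain ⟨s, hsJ, hgen⟩ := hfg
  set N : Submodule A B := Submodule.restrictScalars A (J : Submodule B B) with hN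
  have hNfg : N.FG := by
    refine ⟨s, le_antisymm ?_ ?_⟩
    · rw [Submodule.span_le]
      intro z hz
      exact hsJ hz
    · intro z hz
      obtain ⟨c, hc⟩ := hgen z hz
      rw [hc]
      refine Submodule.sum_mem _ fun b hb => ?_
      rw [← hsmul]
      exact Submodule.smul_mem _ _ (Submodule.subset_span hb)
  haveI : Module.Finite A N := ⟨(Submodule.fg_top N).2 hNfg⟩
  have hunit : ∀ a : A, a ∉ M → IsUnit a := by
    intro a ha
    by_contra h
    obtain ⟨m, hm, hle⟩ := Ideal.exists_le_maximal (Ideal.span {a})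
      (by rwa [Ne, Ideal.span_singleton_eq_top])
    exact ha (hu m hm ▸ hle (Ideal.subset_span rfl))
  refine hJQ fun x hx => ?_
  by_cases hx' : x ∈ Q
  · exact hx'
  exfalso
  have hxJac : x ∈ (⊥ : Ideal B).jacobson := hJac hx
  let φ : N →ₗ[A] N :=
    { toFun := fun z => ⟨x * z, J.mul_mem_left x z.2⟩
      map_add' := fun z w => by ext; simp [mul_add]
      map_smul' := fun a z => by ext; simp [hsmul]; ring }
  obtain ⟨p, hpm, hp0⟩ := LinearMap.exists_monic_and_aeval_eq_zero A φ
  have hpow : ∀ (n : ℕ) (z : N), (((φ ^ n) z : N) : B) = x ^ n * z := by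
    intro n z
    induction n with
    | zero => simp
    | succ k ih =>
      rw [pow_succ', Module.End.mul_apply]
      show x * ((φ ^ k) z : B) = _
      rw [ih]; ring
  have key : ∀ q : A[X], ∀ z : N, ((Polynomial.aeval φ q z : N) : B) = q.eval₂ f x * z := by
    intro q z
    induction q using Polynomial.induction_on' with
    | add q r hq hr =>
      simp only [map_add, LinearMap.add_apply, Submodule.coe_add, hq, hr, eval₂_add, add_mul]
    | monomial n a =>
      rw [aeval_monomial, Module.End.mul_apply, Module.algebraMap_end_apply,
        Submodule.coe_smul, hsmul, hpow, eval₂_monomial]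
      ring
  have hxN : x ∈ N := hx
  have hpx : p.eval₂ f x * x = 0 := by
    have := key p ⟨x, hxN⟩
    rw [hp0] at this
    simpa using this.symm
  have hmem : (p * X).eval₂ f x ∈ Q := by
    rw [eval₂_mul, eval₂_X, hpx]
    exact Q.zero_mem
  have hMQ : ∀ a : A, a ∈ M → f a ∈ Q := by
    intro a ha
    rw [← hcomap] at ha
    exact ha
  have main : ∀ n : ℕ, ∀ q : A[X], q.Monic → q.natDegree ≤ n → q.eval₂ f x ∈ Q → False := by
    intro n
    induction n with
    | zero =>
      intro q hq hdeg hmem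
      have : q = 1 := hq.natDegree_eq_zero.1 (Nat.le_zero.1 hdeg)
      rw [this, eval₂_one] at hmem
      exact hQ.ne_top (Q.eq_top_of_isUnit_mem hmem isUnit_one)
    | succ k ih =>
      intro q hq hdeg hmem
      by_cases h0 : q.natDegree = 0
      · have : q = 1 := hq.natDegree_eq_zero.1 h0
        rw [this, eval₂_one] at hmem
        exact hQ.ne_top (Q.eq_top_of_isUnit_mem hmem isUnit_one)
      have hsplit : q.eval₂ f x = q.divX.eval₂ f x * x + f (q.coeff 0) := by
        conv_lhs => rw [← q.divX_mul_X_add]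
        simp [eval₂_add, eval₂_mul, eval₂_X, eval₂_C]
      by_cases hc : q.coeff 0 ∈ M
      · have h1 : q.divX.eval₂ f x * x ∈ Q := by
          have := Q.sub_mem hmem (hMQ _ hc)
          rwa [hsplit, add_sub_cancel_right] at this
        have h2 : q.divX.eval₂ f x ∈ Q := (hQ.mem_or_mem h1).resolve_right hx'
        have hdm : q.divX.Monic := by
          unfold Polynomial.Monic Polynomial.leadingCoeff
          rw [natDegree_divX_eq_natDegree_tsub_one, coeff_divX,
            Nat.sub_add_cancel (Nat.one_le_iff_ne_zero.2 h0)]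
          exact hq
        exact ih q.divX hdm (by
          rw [natDegree_divX_eq_natDegree_tsub_one]; omega) h2
      · obtain ⟨u, hu'⟩ := (hunit _ hc).map f
        have heq : (x * (q.divX.eval₂ f x * ↑u⁻¹) + 1) * u =
            q.divX.eval₂ f x * x + ↑u := by
          rw [add_mul, one_mul]
          congr 1
          calc x * (q.divX.eval₂ f x * ↑u⁻¹) * ↑u
              = q.divX.eval₂ f x * x * (↑u⁻¹ * ↑u) := by ring
            _ = q.divX.eval₂ f x * x := by rw [u.inv_mul, mul_one]
        have hun : IsUnit (q.eval₂ f x) := by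
          rw [hsplit, ← hu', ← heq]
          exact (Ideal.mem_jacobson_bot.1 hxJac _).mul u.isUnit
        exact hQ.ne_top (Q.eq_top_of_isUnit_mem hmem hun)
  exact main (p * X).natDegree (p * X) (hpm.mul monic_X) le_rfl hmem
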